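/- arXiv:2311.18289 — 7 statements merged into one kernel-verified Lean document; each statement's English description precedes it below -/
import Mathlib

section
/- Let S ⊆ {1,...,n}^d be a sum-free set and let π : ℤ^d → ℤ^{d-1} be the projection forgetting the last coordinate. Then for any x, y, z ∈ {1,...,n}^{d-1} with x + y = z, we have |S ∩ π⁻¹(x)| + |S ∩ π⁻¹(y)| + |S ∩ π⁻¹(z)| ≤ 2n + 1. -/
open Finset Pointwise

/-!
Projecting each fiber to its last coordinate is injective and turns the sum-free condition into
`Disjoint (A + B) C` for three sets of integers in `[1, n]`. By Cauchy–Davenport,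
`#(A + B) ≥ #A + #B - 1`, and `A + B` and `C` are disjoint subsets of `[1, 2n]`.
-/

theorem Int.card_add_card_add_card_le_of_disjoint_add {n : ℕ} {A B C : Finset ℤ}
    (hA : A ⊆ Icc 1 (n : ℤ)) (hB : B ⊆ Icc 1 (n : ℤ)) (hC : C ⊆ Icc 1 (n : ℤ))
    (hABC : Disjoint (A + B) C) :
    #A + #B + #C ≤ 2 * n + 1 := by
  have card_le (s : Finset ℤ) (hs : s ⊆ Icc 1 (n : ℤ)) : #s ≤ n := by
    have := card_le_card hs
    rw [Int.card_Icc] at this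
    omega
  rcases A.eq_empty_or_nonempty with rfl | hA₀
  · simp only [card_empty]; linarith [card_le B hB, card_le C hC]
  rcases B.eq_empty_or_nonempty with rfl | hB₀
  · simp only [card_empty]; linarith [card_le A hA, card_le C hC]
  have hsum : A + B ∪ C ⊆ Icc 1 (2 * n : ℤ) := by
    refine union_subset (fun c hc ↦ ?_) fun c hc ↦ ?_
    · obtain ⟨a, ha, b, hb, rfl⟩ := mem_add.1 hc
      have := mem_Icc.1 (hA ha); have := mem_Icc.1 (hB hb)
      rw [mem_Icc]; omega
    · have := mem_Icc.1 (hC hc)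
      rw [mem_Icc]; omega
  have hunion : #(A + B) + #C ≤ 2 * n := by
    have := card_le_card hsum
    rw [card_union_of_disjoint hABC, Int.card_Icc] at this
    omega
  have := cauchy_davenport_add_of_linearOrder_isCancelAdd hA₀ hB₀
  have := hA₀.card_pos
  omega

theorem Fin.eq_of_init_eq_of_last_eq {α : Type*} {d : ℕ} {p q : Fin (d + 1) → α}
    (hinit : Fin.init p = Fin.init q) (hlast : p (Fin.last d) = q (Fin.last d)) : p = q := by
  rw [← Fin.snoc_init_self p, ← Fin.snoc_init_self q, hinit, hlast]

section LastCoordinate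

variable {α : Type*} [DecidableEq α] {d : ℕ}

def lastCoordsOver (S : Finset (Fin (d + 1) → α)) (x : Fin d → α) : Finset α :=
  (S.filter fun w ↦ Fin.init w = x).image (· (Fin.last d))

theorem card_lastCoordsOver (S : Finset (Fin (d + 1) → α)) (x : Fin d → α) :
    #(lastCoordsOver S x) = #(S.filter fun w ↦ Fin.init w = x) := by
  refine card_image_of_injOn fun v hv w hw hvw ↦ Fin.eq_of_init_eq_of_last_eq ?_ hvw
  simp only [coe_filter, Set.mem_ofPred_eq] at hv hw
  rw [hv.2, hw.2]

theorem lastCoordsOver_subset {S : Finset (Fin (d + 1) → α)} {T : Finset α}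
    (hS : ∀ v ∈ S, v (Fin.last d) ∈ T) (x : Fin d → α) : lastCoordsOver S x ⊆ T := by
  simp only [lastCoordsOver, image_subset_iff, mem_filter]
  exact fun v hv ↦ hS v hv.1

theorem disjoint_lastCoordsOver_add [Add α] {S : Finset (Fin (d + 1) → α)}
    (hS : ∀ u ∈ S, ∀ v ∈ S, ∀ w ∈ S, u + v ≠ w) {x y z : Fin d → α} (hxyz : x + y = z) :
    Disjoint (lastCoordsOver S x + lastCoordsOver S y) (lastCoordsOver S z) := by
  simp only [disjoint_left, mem_add, lastCoordsOver, mem_image, mem_filter]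
  rintro _ ⟨_, ⟨u, ⟨hu, hux⟩, rfl⟩, _, ⟨v, ⟨hv, hvy⟩, rfl⟩, rfl⟩ ⟨w, ⟨hw, hwz⟩, hlast⟩
  refine hS u hu v hv w hw (Fin.eq_of_init_eq_of_last_eq ?_ hlast.symm)
  change Fin.init u + Fin.init v = Fin.init w
  rw [hux, hvy, hwz, hxyz]

end LastCoordinate

theorem stmt1_general (d n : ℕ) (S : Finset (Fin (d + 1) → ℤ))
    (hbox : ∀ v ∈ S, ∀ i, 1 ≤ v i ∧ v i ≤ (n : ℤ))
    (hsf : ∀ x ∈ S, ∀ y ∈ S, ∀ z ∈ S, x + y ≠ z)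
    (x y z : Fin d → ℤ)
    (hxyz : x + y = z) :
    (S.filter fun w => (fun i : Fin d => w i.castSucc) = x).card +
      (S.filter fun w => (fun i : Fin d => w i.castSucc) = y).card +
      (S.filter fun w => (fun i : Fin d => w i.castSucc) = z).card ≤ 2 * n + 1 := by
  have hlast : ∀ v ∈ S, v (Fin.last d) ∈ Icc 1 (n : ℤ) :=
    fun v hv ↦ mem_Icc.2 (hbox v hv (Fin.last d))
  have key := Int.card_add_card_add_card_le_of_disjoint_add (lastCoordsOver_subset hlast x)
    (lastCoordsOver_subset hlast y) (lastCoordsOver_subset hlast z)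
    (disjoint_lastCoordsOver_add hsf hxyz)
  rwa [card_lastCoordsOver, card_lastCoordsOver, card_lastCoordsOver] at key

/-- For a sum-free `S ⊆ {1,…,n}^{d+1}` and `x + y = z` in `{1,…,n}^d`, the total number
of points of `S` in the three fibers over `x`, `y`, `z` (under the projection forgetting
the last coordinate) is at most `2n + 1`. -/
theorem stmt1 (d n : ℕ) (S : Finset (Fin (d + 1) → ℤ))
    (hbox : ∀ v ∈ S, ∀ i, 1 ≤ v i ∧ v i ≤ (n : ℤ))
    (hsf : ∀ x ∈ S, ∀ y ∈ S, ∀ z ∈ S, x + y ≠ z)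
    (x y z : Fin d → ℤ)
    (hx : ∀ i, 1 ≤ x i ∧ x i ≤ (n : ℤ))
    (hy : ∀ i, 1 ≤ y i ∧ y i ≤ (n : ℤ))
    (hz : ∀ i, 1 ≤ z i ∧ z i ≤ (n : ℤ))
    (hxyz : x + y = z) :
    (S.filter fun w => (fun i : Fin d => w i.castSucc) = x).card +
      (S.filter fun w => (fun i : Fin d => w i.castSucc) = y).card +
      (S.filter fun w => (fun i : Fin d => w i.castSucc) = z).card ≤ 2 * n + 1 :=
  stmt1_general d n S hbox hsf x y z hxyz
end

section
/- Let S ⊆ [0,1]^d be a measurable sum-free set (no x, y, z ∈ S with x + y = z), and let λ(v) denote the 1-dimensional Lebesgue measure of S ∩ π⁻¹(v) where π : ℝ^d → ℝ^{d-1} forgets the last coordinate. Then for almost every x, y, z ∈ [0,1]^{d-1} with x + y = z, λ(x) + λ(y) + λ(z) ≤ 2. -/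
/-!
The bound holds for every `x, y`, not just almost every. The fibres `A, B, C ⊆ [0,1]` over
`x, y, x + y` satisfy `(A + B) ∩ C = ∅`, since `snoc x a + snoc y b = snoc (x + y) (a + b)`.
By inner regularity it suffices to treat compact `K ⊆ A`, `L ⊆ B`, and one-dimensional
Brunn–Minkowski `|K| + |L| ≤ |K + L|` then gives `|K| + |L| + |C| ≤ |(K + L) ∪ C| ≤ |[0,2]| = 2`.
-/

open MeasureTheory Set
open scoped Pointwise ENNReal

theorem Fin.snoc_add_snoc {α : Type*} [Add α] {n : ℕ} (x y : Fin n → α) (a b : α) :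
    (Fin.snoc x a : Fin (n + 1) → α) + Fin.snoc y b = Fin.snoc (x + y) (a + b) := by
  funext i
  cases i using Fin.lastCases <;> simp

namespace Real

theorem volume_add_volume_le_volume_add {K L : Set ℝ} (hK : IsCompact K) (hL : IsCompact L)
    (hK₀ : K.Nonempty) (hL₀ : L.Nonempty) : volume K + volume L ≤ volume (K + L) := by
  set k := sSup K
  set l := sInf L
  have hk : k ∈ K := hK.sSup_mem hK₀
  have hl : l ∈ L := hL.sInf_mem hL₀
  have hinter : (k +ᵥ L) ∩ (l +ᵥ K) ⊆ {k + l} := by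
    rintro _ ⟨⟨b, hb, rfl⟩, a, ha, hab⟩
    have hak : a ≤ k := le_csSup hK.bddAbove ha
    have hlb : l ≤ b := csInf_le hL.bddBelow hb
    simp only [vadd_eq_add, mem_singleton_iff] at hab ⊢
    linarith
  have hunion : (k +ᵥ L) ∪ (l +ᵥ K) ⊆ K + L := by
    rintro _ (⟨b, hb, rfl⟩ | ⟨a, ha, rfl⟩)
    · exact add_mem_add hk hb
    · simpa only [vadd_eq_add, add_comm l] using add_mem_add ha hl
  calc volume K + volume L = volume (k +ᵥ L) + volume (l +ᵥ K) := by
        rw [measure_vadd, measure_vadd, add_comm]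
    _ = volume ((k +ᵥ L) ∪ (l +ᵥ K)) := by
        rw [← measure_union_add_inter _ (hK.vadd l).measurableSet,
          measure_mono_null hinter (measure_singleton _), add_zero]
    _ ≤ volume (K + L) := measure_mono hunion

theorem volume_le_one_of_subset_Icc {s : Set ℝ} (hs : s ⊆ Icc 0 1) : volume s ≤ 1 := by
  simpa using measure_mono (μ := volume) hs

theorem volume_add_volume_add_volume_le_two_of_isCompact {K L C : Set ℝ}
    (hK : IsCompact K) (hL : IsCompact L) (hKs : K ⊆ Icc 0 1) (hLs : L ⊆ Icc 0 1)
    (hCs : C ⊆ Icc 0 1) (hKLC : Disjoint (K + L) C) :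
    volume K + volume L + volume C ≤ 2 := by
  rcases K.eq_empty_or_nonempty with rfl | hK₀
  · simpa [one_add_one_eq_two] using
      add_le_add (volume_le_one_of_subset_Icc hLs) (volume_le_one_of_subset_Icc hCs)
  rcases L.eq_empty_or_nonempty with rfl | hL₀
  · simpa [one_add_one_eq_two] using
      add_le_add (volume_le_one_of_subset_Icc hKs) (volume_le_one_of_subset_Icc hCs)
  have hKL : K + L ⊆ Icc 0 2 := by
    simpa [one_add_one_eq_two] using (add_subset_add hKs hLs).trans (Icc_add_Icc_subset 0 1 0 1)
  calc volume K + volume L + volume C ≤ volume (K + L) + volume C := by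
        gcongr; exact volume_add_volume_le_volume_add hK hL hK₀ hL₀
    _ = volume ((K + L) ∪ C) := (measure_union' hKLC (hK.add hL).measurableSet).symm
    _ ≤ volume (Icc (0 : ℝ) 2) :=
        measure_mono (union_subset hKL (hCs.trans (Icc_subset_Icc le_rfl one_le_two)))
    _ = 2 := by simp

theorem volume_add_volume_add_volume_le_two {A B C : Set ℝ}
    (hA : MeasurableSet A) (hB : MeasurableSet B) (hAs : A ⊆ Icc 0 1) (hBs : B ⊆ Icc 0 1)
    (hCs : C ⊆ Icc 0 1) (hABC : Disjoint (A + B) C) :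
    volume A + volume B + volume C ≤ 2 := by
  have hC : volume C ≠ ∞ :=
    ne_top_of_le_ne_top ENNReal.one_ne_top (volume_le_one_of_subset_Icc hCs)
  have hC2 : volume C ≤ 2 := (volume_le_one_of_subset_Icc hCs).trans one_le_two
  rw [← ENNReal.le_sub_iff_add_le_right hC hC2, hA.measure_eq_iSup_isCompact,
    hB.measure_eq_iSup_isCompact]
  simp only [iSup_and']
  refine ENNReal.biSup_add_biSup_le' ⟨∅, empty_subset _, isCompact_empty⟩
    ⟨∅, empty_subset _, isCompact_empty⟩ fun K ⟨hKA, hK⟩ L ⟨hLB, hL⟩ => ?_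
  rw [ENNReal.le_sub_iff_add_le_right hC hC2]
  exact volume_add_volume_add_volume_le_two_of_isCompact hK hL (hKA.trans hAs) (hLB.trans hBs) hCs
    (hABC.mono_left (add_subset_add hKA hLB))

end Real

theorem volume_fiber_add_volume_fiber_add_volume_fiber_le_two {d : ℕ}
    {S : Set (Fin (d + 1) → ℝ)} (hS : MeasurableSet S)
    (hsf : ∀ x ∈ S, ∀ y ∈ S, ∀ z ∈ S, x + y ≠ z) (x y : Fin d → ℝ) :
    volume {t ∈ Icc (0 : ℝ) 1 | Fin.snoc x t ∈ S}
      + volume {t ∈ Icc (0 : ℝ) 1 | Fin.snoc y t ∈ S}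
      + volume {t ∈ Icc (0 : ℝ) 1 | Fin.snoc (x + y) t ∈ S} ≤ 2 := by
  have hfiber (v : Fin d → ℝ) : MeasurableSet {t ∈ Icc (0 : ℝ) 1 | Fin.snoc v t ∈ S} :=
    measurableSet_Icc.inter (hS.preimage (continuous_const.finSnoc continuous_id).measurable)
  refine Real.volume_add_volume_add_volume_le_two (hfiber x) (hfiber y) (sep_subset _ _)
    (sep_subset _ _) (sep_subset _ _) ?_
  rw [Set.disjoint_left]
  rintro _ ⟨a, ⟨-, ha⟩, b, ⟨-, hb⟩, rfl⟩ ⟨-, hab⟩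
  exact hsf _ ha _ hb _ hab (Fin.snoc_add_snoc x y a b)

theorem stmt2_general (d : ℕ) (S : Set (Fin (d + 1) → ℝ)) (hSm : MeasurableSet S)
    (hsf : ∀ x ∈ S, ∀ y ∈ S, ∀ z ∈ S, x + y ≠ z)
    (lam : (Fin d → ℝ) → ℝ)
    (hlam : ∀ v, lam v = (volume {t ∈ Set.Icc (0 : ℝ) 1 | Fin.snoc v t ∈ S}).toReal) :
    ∀ᵐ p : (Fin d → ℝ) × (Fin d → ℝ) ∂volume,
      (∀ i, p.1 i ∈ Set.Icc (0 : ℝ) 1) → (∀ i, p.2 i ∈ Set.Icc (0 : ℝ) 1) →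
      (∀ i, p.1 i + p.2 i ∈ Set.Icc (0 : ℝ) 1) →
      lam p.1 + lam p.2 + lam (p.1 + p.2) ≤ 2 := by
  refine Filter.Eventually.of_forall fun ⟨x, y⟩ _ _ _ => ?_
  have hsum := volume_fiber_add_volume_fiber_add_volume_fiber_le_two hSm hsf x y
  have hfin : _ ≠ ∞ := ne_top_of_le_ne_top ENNReal.ofNat_ne_top hsum
  simp only [ENNReal.add_ne_top] at hfin
  rw [hlam, hlam, hlam, ← ENNReal.toReal_add hfin.1.1 hfin.1.2,
    ← ENNReal.toReal_add (ENNReal.add_ne_top.2 hfin.1) hfin.2]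
  simpa using ENNReal.toReal_mono ENNReal.ofNat_ne_top hsum

/-- If `S ⊆ [0,1]^{d+1}` is a measurable sum-free set and `λ(v)` is the measure of the
fiber of `S` over `v` (projection forgetting the last coordinate), then for almost every
`x, y` with `x`, `y`, `x + y` in `[0,1]^d`, `λ(x) + λ(y) + λ(x+y) ≤ 2`. -/
theorem stmt2 (d : ℕ) (S : Set (Fin (d + 1) → ℝ)) (hSm : MeasurableSet S)
    (hsub : S ⊆ {v | ∀ i, v i ∈ Set.Icc (0 : ℝ) 1})
    (hsf : ∀ x ∈ S, ∀ y ∈ S, ∀ z ∈ S, x + y ≠ z)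
    (lam : (Fin d → ℝ) → ℝ)
    (hlam : ∀ v, lam v = (volume {t ∈ Set.Icc (0 : ℝ) 1 | Fin.snoc v t ∈ S}).toReal) :
    ∀ᵐ p : (Fin d → ℝ) × (Fin d → ℝ) ∂volume,
      (∀ i, p.1 i ∈ Set.Icc (0 : ℝ) 1) → (∀ i, p.2 i ∈ Set.Icc (0 : ℝ) 1) →
      (∀ i, p.1 i + p.2 i ∈ Set.Icc (0 : ℝ) 1) →
      lam p.1 + lam p.2 + lam (p.1 + p.2) ≤ 2 :=
  stmt2_general d S hSm hsf lam hlam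
end

section
/- Let u₃ = (15 - √15)/10. Then the d = 3 continuous lower bound construction has the claimed volume: the volume of {v ∈ [0,1]³ : u₃ ≤ v₁+v₂+v₃ < 2u₃} equals (10 + √15)/20. -/
/-!
The volume `F n t` of `{v ∈ [0,1]ⁿ : ∑ vᵢ < t}` is the Irwin–Hall distribution function
`∑ₖ (-1)ᵏ (n choose k) (t - k)₊ⁿ / n!`. By Fubini `F (n+1) t = ∫₀¹ F n (t - x) dx`; integrating
the truncated powers term by term and regrouping with Pascal's rule reproduces the formula for
`n + 1`. The slab is the difference of two such sets, and for `1 ≤ u ≤ 3/2` the cubic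
`F 3 (2u) - F 3 u = (10u³ - 45u² + 63u - 24)/6` takes the value `(10 + √15)/20` at `u₃`.
-/

open MeasureTheory Set
open scoped Nat

noncomputable def rampPow (n : ℕ) (t : ℝ) : ℝ := max 0 t ^ n / n !

lemma continuous_rampPow (n : ℕ) : Continuous (rampPow n) := by
  unfold rampPow; fun_prop

lemma rampPow_of_nonpos {n : ℕ} (hn : n ≠ 0) {t : ℝ} (ht : t ≤ 0) : rampPow n t = 0 := by
  simp [rampPow, max_eq_left ht, hn]

lemma rampPow_of_nonneg (n : ℕ) {t : ℝ} (ht : 0 ≤ t) : rampPow n t = t ^ n / n ! := by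
  rw [rampPow, max_eq_right ht]

lemma hasDerivAt_rampPow_succ {n : ℕ} (hn : n ≠ 0) (t : ℝ) :
    HasDerivAt (rampPow (n + 1)) (rampPow n t) t := by
  refine hasDerivAt_of_hasDerivAt_of_ne' (x := 0) (fun s hs => ?_)
    (continuous_rampPow _).continuousAt (continuous_rampPow _).continuousAt t
  rcases hs.lt_or_gt with hs | hs
  · have h : rampPow (n + 1) =ᶠ[nhds s] fun _ => 0 := by
      filter_upwards [eventually_lt_nhds hs] with r hr
      exact rampPow_of_nonpos n.succ_ne_zero hr.le
    rw [h.hasDerivAt_iff, rampPow_of_nonpos hn hs.le]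
    exact hasDerivAt_const s 0
  · have h : rampPow (n + 1) =ᶠ[nhds s] fun r => r ^ (n + 1) / (n + 1) ! := by
      filter_upwards [eventually_gt_nhds hs] with r hr
      exact rampPow_of_nonneg _ hr.le
    rw [h.hasDerivAt_iff, rampPow_of_nonneg _ hs.le]
    refine ((hasDerivAt_pow (n + 1) s).div_const _).congr_deriv ?_
    rw [Nat.add_sub_cancel, Nat.factorial_succ]
    push_cast
    field_simp

lemma integral_rampPow_comp_sub {n : ℕ} (hn : n ≠ 0) (t : ℝ) :
    ∫ x in (0 : ℝ)..1, rampPow n (t - x) = rampPow (n + 1) t - rampPow (n + 1) (t - 1) := by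
  rw [intervalIntegral.integral_comp_sub_left (rampPow n) t, sub_zero]
  exact intervalIntegral.integral_eq_sub_of_hasDerivAt (fun s _ => hasDerivAt_rampPow_succ hn s)
    ((continuous_rampPow n).intervalIntegrable _ _)

lemma sum_range_alternating_choose_mul_sub {R : Type*} [CommRing R] (n : ℕ) (a : ℕ → R) :
    ∑ k ∈ Finset.range (n + 1), (-1) ^ k * n.choose k * (a k - a (k + 1)) =
      ∑ k ∈ Finset.range (n + 2), (-1) ^ k * (n + 1).choose k * a k := by
  have hlast : ∑ k ∈ Finset.range (n + 2), (-1) ^ k * (n.choose k : R) * a k =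
      ∑ k ∈ Finset.range (n + 1), (-1) ^ k * (n.choose k : R) * a k := by
    simp [Finset.sum_range_succ _ (n + 1)]
  simp only [mul_sub, Finset.sum_sub_distrib]
  rw [Finset.sum_range_succ' (fun k => (-1) ^ k * ((n + 1).choose k : R) * a k), ← hlast,
    Finset.sum_range_succ' (fun k => (-1) ^ k * (n.choose k : R) * a k) (n + 1)]
  simp only [Nat.choose_succ_succ, Nat.cast_add, pow_succ, mul_add, add_mul, Finset.sum_add_distrib,
    Nat.choose_zero_right, mul_neg_one, neg_mul, Finset.sum_neg_distrib]
  ring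

noncomputable def irwinHallCDF (n : ℕ) (t : ℝ) : ℝ :=
  ∑ k ∈ Finset.range (n + 1), (-1) ^ k * n.choose k * rampPow n (t - k)

lemma continuous_irwinHallCDF (n : ℕ) : Continuous (irwinHallCDF n) := by
  unfold irwinHallCDF
  have := continuous_rampPow n
  fun_prop

lemma integral_irwinHallCDF_comp_sub {n : ℕ} (hn : n ≠ 0) (t : ℝ) :
    ∫ x in (0 : ℝ)..1, irwinHallCDF n (t - x) = irwinHallCDF (n + 1) t := by
  have hterm (k : ℕ) : ∫ x in (0 : ℝ)..1, rampPow n (t - x - k) =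
      rampPow (n + 1) (t - k) - rampPow (n + 1) (t - ↑(k + 1)) := by
    simp_rw [sub_right_comm t _ (k : ℝ)]
    rw [integral_rampPow_comp_sub hn]
    push_cast; ring_nf
  unfold irwinHallCDF
  have hc := continuous_rampPow n
  rw [intervalIntegral.integral_finsetSum fun k _ => (by fun_prop : Continuous
    fun x => (-1) ^ k * (n.choose k : ℝ) * rampPow n (t - x - k)).intervalIntegrable _ _]
  simp_rw [intervalIntegral.integral_const_mul, hterm]
  exact sum_range_alternating_choose_mul_sub n fun k => rampPow (n + 1) (t - k)

lemma irwinHallCDF_one (t : ℝ) : irwinHallCDF 1 t = max 0 t - max 0 (t - 1) := by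
  simp [irwinHallCDF, rampPow, Finset.sum_range_succ, sub_eq_add_neg]

lemma irwinHallCDF_nonneg {n : ℕ} (hn : n ≠ 0) (t : ℝ) : 0 ≤ irwinHallCDF n t := by
  induction n generalizing t with
  | zero => exact absurd rfl hn
  | succ n ih =>
    rcases eq_or_ne n 0 with rfl | hn'
    · rw [irwinHallCDF_one, sub_nonneg]
      exact max_le_max le_rfl (by linarith)
    · rw [← integral_irwinHallCDF_comp_sub hn']
      exact intervalIntegral.integral_nonneg zero_le_one fun x _ => ih hn' _

def unitCubeSumLT (n : ℕ) (t : ℝ) : Set (Fin n → ℝ) :=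
  {v | (∀ i, v i ∈ Icc (0 : ℝ) 1) ∧ ∑ i, v i < t}

lemma measurableSet_unitCubeSumLT (n : ℕ) (t : ℝ) : MeasurableSet (unitCubeSumLT n t) := by
  unfold unitCubeSumLT
  measurability

lemma volume_unitCubeSumLT_succ (n : ℕ) (t : ℝ) :
    volume (unitCubeSumLT (n + 1) t) = ∫⁻ x in Icc 0 1, volume (unitCubeSumLT n (t - x)) := by
  have hmp := (volume_preserving_piFinSuccAbove (fun _ : Fin (n + 1) => ℝ) 0).symm
  have hpre : (MeasurableEquiv.piFinSuccAbove (fun _ : Fin (n + 1) => ℝ) 0).symm ⁻¹'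
      unitCubeSumLT (n + 1) t = {p | p.1 ∈ Icc 0 1 ∧ p.2 ∈ unitCubeSumLT n (t - p.1)} := by
    ext ⟨x, w⟩
    simp [unitCubeSumLT, Fin.sum_univ_succ, Fin.forall_fin_succ, lt_sub_iff_add_lt', and_assoc]
  rw [← hmp.measure_preimage (measurableSet_unitCubeSumLT _ _).nullMeasurableSet, hpre,
    Measure.volume_eq_prod, Measure.prod_apply (hpre ▸ (measurableSet_unitCubeSumLT _ _).preimage
      (MeasurableEquiv.measurable _)), ← lintegral_indicator measurableSet_Icc]
  congr 1 with x
  by_cases hx : x ∈ Icc (0 : ℝ) 1 <;> simp [hx, -mem_Icc]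

lemma volume_unitCubeSumLT_one (t : ℝ) :
    volume (unitCubeSumLT 1 t) = ENNReal.ofReal (irwinHallCDF 1 t) := by
  have hmp := volume_preserving_funUnique (Fin 1) ℝ
  have hpre : unitCubeSumLT 1 t = MeasurableEquiv.funUnique (Fin 1) ℝ ⁻¹' (Icc 0 1 ∩ Iio t) := by
    ext v
    simp [unitCubeSumLT, Fin.forall_fin_one]
  rw [hpre]
  refine (hmp.measure_preimage_equiv _).trans ?_
  rw [irwinHallCDF_one]
  rcases le_or_gt t 1 with ht | ht
  · have hset : Icc 0 1 ∩ Iio t = Ico 0 t := by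
      ext x
      simp only [mem_inter_iff, mem_Icc, mem_Iio, mem_Ico]
      exact ⟨fun h => ⟨h.1.1, h.2⟩, fun h => ⟨⟨h.1, by linarith [h.2]⟩, h.2⟩⟩
    rw [hset, Real.volume_Ico, max_eq_left (by linarith : t - 1 ≤ 0)]
    simp
  · rw [inter_eq_left.2 fun x hx => mem_Iio.2 (hx.2.trans_lt ht), Real.volume_Icc,
      max_eq_right (by linarith : (0 : ℝ) ≤ t), max_eq_right (by linarith : (0 : ℝ) ≤ t - 1)]
    ring_nf

theorem volume_unitCubeSumLT {n : ℕ} (hn : n ≠ 0) (t : ℝ) :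
    volume (unitCubeSumLT n t) = ENNReal.ofReal (irwinHallCDF n t) := by
  induction n generalizing t with
  | zero => exact absurd rfl hn
  | succ n ih =>
    rcases eq_or_ne n 0 with rfl | hn'
    · exact volume_unitCubeSumLT_one t
    rw [volume_unitCubeSumLT_succ, ← integral_irwinHallCDF_comp_sub hn',
      intervalIntegral.integral_of_le zero_le_one, ← integral_Icc_eq_integral_Ioc,
      ofReal_integral_eq_lintegral_ofReal]
    · exact setLIntegral_congr_fun measurableSet_Icc fun x _ => ih hn' (t - x)
    · exact ((continuous_irwinHallCDF n).comp (by fun_prop)).integrableOn_Icc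
    · exact Filter.Eventually.of_forall fun x => irwinHallCDF_nonneg hn' _

theorem volume_unitCube_sum_mem_Ico {n : ℕ} (hn : n ≠ 0) {a b : ℝ} (hab : a ≤ b) :
    volume {v : Fin n → ℝ | (∀ i, v i ∈ Icc (0 : ℝ) 1) ∧ a ≤ ∑ i, v i ∧ ∑ i, v i < b} =
      ENNReal.ofReal (irwinHallCDF n b - irwinHallCDF n a) := by
  have hdiff : {v : Fin n → ℝ | (∀ i, v i ∈ Icc (0 : ℝ) 1) ∧ a ≤ ∑ i, v i ∧ ∑ i, v i < b} =
      unitCubeSumLT n b \ unitCubeSumLT n a := by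
    ext v
    simp only [unitCubeSumLT, mem_sdiff, mem_ofPred_eq, not_and, not_lt]
    exact ⟨fun ⟨hv, ha, hb⟩ => ⟨⟨hv, hb⟩, fun _ => ha⟩, fun ⟨⟨hv, hb⟩, ha⟩ => ⟨hv, ha hv, hb⟩⟩
  have hsub : unitCubeSumLT n a ⊆ unitCubeSumLT n b := fun v hv => ⟨hv.1, hv.2.trans_le hab⟩
  rw [hdiff, measure_sdiff hsub (measurableSet_unitCubeSumLT n a).nullMeasurableSet
      (by simp [volume_unitCubeSumLT hn]), volume_unitCubeSumLT hn, volume_unitCubeSumLT hn,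
    ENNReal.ofReal_sub _ (irwinHallCDF_nonneg hn a)]

lemma irwinHallCDF_three_two_mul_sub {u : ℝ} (h1 : 1 ≤ u) (h2 : u ≤ 3 / 2) :
    irwinHallCDF 3 (2 * u) - irwinHallCDF 3 u = (10 * u ^ 3 - 45 * u ^ 2 + 63 * u - 24) / 6 := by
  simp only [irwinHallCDF, Finset.sum_range_succ, Finset.sum_range_zero, Nat.cast_zero,
    Nat.cast_one, Nat.cast_ofNat, sub_zero]
  rw [rampPow_of_nonpos three_ne_zero (by linarith : 2 * u - 3 ≤ 0),
    rampPow_of_nonpos three_ne_zero (by linarith : u - 2 ≤ 0),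
    rampPow_of_nonpos three_ne_zero (by linarith : u - 3 ≤ 0),
    rampPow_of_nonneg 3 (by linarith : 0 ≤ 2 * u),
    rampPow_of_nonneg 3 (by linarith : 0 ≤ 2 * u - 1),
    rampPow_of_nonneg 3 (by linarith : 0 ≤ 2 * u - 2),
    rampPow_of_nonneg 3 (by linarith : 0 ≤ u),
    rampPow_of_nonneg 3 (by linarith : 0 ≤ u - 1)]
  simp only [Nat.choose, Nat.factorial]
  push_cast
  ring

/-- With `u₃ = (15 - √15)/10`, the volume of
`{v ∈ [0,1]³ : u₃ ≤ v₁+v₂+v₃ < 2u₃}` equals `(10 + √15)/20`. -/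
theorem stmt3 :
    volume {v : Fin 3 → ℝ | (∀ i, v i ∈ Set.Icc (0 : ℝ) 1) ∧
        (15 - Real.sqrt 15) / 10 ≤ ∑ i, v i ∧
        ∑ i, v i < 2 * ((15 - Real.sqrt 15) / 10)} =
      ENNReal.ofReal ((10 + Real.sqrt 15) / 20) := by
  have hsq : Real.sqrt 15 ^ 2 = 15 := Real.sq_sqrt (by norm_num)
  have hlo : 3 ≤ Real.sqrt 15 := Real.le_sqrt_of_sq_le (by norm_num)
  have hhi : Real.sqrt 15 ≤ 4 := Real.sqrt_le_iff.2 ⟨by norm_num, by norm_num⟩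
  rw [volume_unitCube_sum_mem_Ico three_ne_zero (by linarith),
    irwinHallCDF_three_two_mul_sub (by linarith) (by linarith)]
  congr 1
  linear_combination (-(Real.sqrt 15) / 600) * hsq
end

section
/- For every d ∈ ℕ with d ≥ 1, the largest sum-free subset of {1,...,n}^d has size at least c*_d n^d + O(n^{d-1}), where c*_d = max over u ∈ [0,d] of the volume of {v ∈ [0,1]^d : u ≤ 𝟙ᵀv < 2u}. -/
open MeasureTheory Pointwise

/-! For a threshold `u`, the integer points `v ∈ [1,n]^d` with `un ≤ 𝟙ᵀv < 2un` form a sum-free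
set, because the coordinate sum of a sum of two of them is at least `2un`. To count them, note that
every point `w` of the dilated slab `n • {v ∈ [0,1]^d : u ≤ 𝟙ᵀv < 2u}` with `𝟙ᵀw < 2un - d` lies
in the unit cube `[v - 1, v]` of such a lattice point, namely `v = max ⌈w⌉ 1`; the remaining strip
`2un - d ≤ 𝟙ᵀw < 2un` has volume at most `d n^{d-1}` by Fubini over one coordinate. Choosing `u`
within `1/n` of the supremum costs another `n^{d-1}`. -/

section Slab

variable {ι : Type*} [Fintype ι]

def boxSlab (R a b : ℝ) : Set (ι → ℝ) :=
  {v | (∀ i, v i ∈ Set.Icc 0 R) ∧ a ≤ ∑ i, v i ∧ ∑ i, v i < b}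

lemma boxSlab_subset_union (R a b c : ℝ) :
    (boxSlab R a b : Set (ι → ℝ)) ⊆ boxSlab R a c ∪ boxSlab R c b := by
  rintro v ⟨hbox, ha, hb⟩
  rcases lt_or_ge (∑ i, v i) c with hc | hc
  · exact Or.inl ⟨hbox, ha, hc⟩
  · exact Or.inr ⟨hbox, hc, hb⟩

lemma smul_boxSlab {c : ℝ} (hc : 0 < c) (R a b : ℝ) :
    c • (boxSlab R a b : Set (ι → ℝ)) = boxSlab (c * R) (c * a) (c * b) := by
  ext w
  simp only [Set.mem_smul_set_iff_inv_smul_mem₀ hc.ne', boxSlab, Set.mem_ofPred_eq, Set.mem_Icc,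
    Pi.smul_apply, smul_eq_mul, ← Finset.mul_sum, mul_nonneg_iff_of_pos_left (inv_pos.2 hc),
    inv_mul_le_iff₀ hc, le_inv_mul_iff₀ hc, inv_mul_lt_iff₀ hc]

lemma volume_boxSlab_mul {c : ℝ} (hc : 0 < c) (R a b : ℝ) :
    volume (boxSlab (c * R) (c * a) (c * b) : Set (ι → ℝ)) =
      ENNReal.ofReal (c ^ Fintype.card ι) * volume (boxSlab R a b : Set (ι → ℝ)) := by
  rw [← smul_boxSlab hc, Measure.addHaar_smul_of_nonneg _ hc.le,
    Module.finrank_fintype_fun_eq_card]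

end Slab

lemma volume_boxSlab_le (m : ℕ) (R a b : ℝ) :
    volume (boxSlab R a b : Set (Fin (m + 1) → ℝ)) ≤
      ENNReal.ofReal (b - a) * ENNReal.ofReal R ^ m := by
  set box : Set (Fin m → ℝ) := Set.univ.pi fun _ => Set.Icc 0 R
  set T : Set (ℝ × (Fin m → ℝ)) :=
    {p | p.2 ∈ box ∧ a ≤ p.1 + ∑ j, p.2 j ∧ p.1 + ∑ j, p.2 j ≤ b}
  have hbox : MeasurableSet box := MeasurableSet.univ_pi fun _ => measurableSet_Icc
  have hsum : Measurable fun p : ℝ × (Fin m → ℝ) => p.1 + ∑ j, p.2 j := by fun_prop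
  have hT : MeasurableSet T :=
    (hbox.preimage measurable_snd).inter
      ((measurableSet_le measurable_const hsum).inter (measurableSet_le hsum measurable_const))
  have hsub : boxSlab R a b ⊆ MeasurableEquiv.piFinSuccAbove (fun _ => ℝ) 0 ⁻¹' T := by
    rintro v ⟨hv, ha, hb⟩
    rw [Fin.sum_univ_succAbove v 0] at ha hb
    exact ⟨fun j _ => hv _, ha, hb.le⟩
  have hslice : ∀ x, volume ((fun t => (t, x)) ⁻¹' T) ≤
      box.indicator (fun _ => ENNReal.ofReal (b - a)) x := by
    intro x
    by_cases hx : x ∈ box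
    · rw [Set.indicator_of_mem hx]
      calc volume ((fun t => (t, x)) ⁻¹' T)
          ≤ volume (Set.Icc (a - ∑ j, x j) (b - ∑ j, x j)) :=
            measure_mono fun t ht => ⟨by linarith [ht.2.1], by linarith [ht.2.2]⟩
        _ = ENNReal.ofReal (b - a) := by rw [Real.volume_Icc]; ring_nf
    · have hempty : (fun t => (t, x)) ⁻¹' T = ∅ :=
        Set.eq_empty_of_forall_notMem fun t ht => hx ht.1
      simp [hempty]
  calc volume (boxSlab R a b : Set (Fin (m + 1) → ℝ))
      ≤ volume (MeasurableEquiv.piFinSuccAbove (fun _ => ℝ) 0 ⁻¹' T) := measure_mono hsub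
    _ = volume T :=
        (volume_preserving_piFinSuccAbove (fun _ => ℝ) 0).measure_preimage hT.nullMeasurableSet
    _ = ∫⁻ x, volume ((fun t => (t, x)) ⁻¹' T) := Measure.prod_apply_symm hT
    _ ≤ ∫⁻ x, box.indicator (fun _ => ENNReal.ofReal (b - a)) x := lintegral_mono hslice
    _ = ENNReal.ofReal (b - a) * volume box := lintegral_indicator_const hbox _
    _ = ENNReal.ofReal (b - a) * ENNReal.ofReal R ^ m := by
        rw [volume_pi_pi]
        simp [Real.volume_Icc]

section Lattice

variable {ι : Type*} [Fintype ι]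

open Classical in
noncomputable def latticeSlab (n : ℕ) (a b : ℝ) : Finset (ι → ℤ) :=
  (Fintype.piFinset fun _ => Finset.Icc 1 (n : ℤ)).filter
    fun v => a ≤ ∑ i, (v i : ℝ) ∧ ∑ i, (v i : ℝ) < b

lemma mem_latticeSlab {n : ℕ} {a b : ℝ} {v : ι → ℤ} :
    v ∈ latticeSlab n a b ↔
      (∀ i, 1 ≤ v i ∧ v i ≤ n) ∧ a ≤ ∑ i, (v i : ℝ) ∧ ∑ i, (v i : ℝ) < b := by
  simp [latticeSlab, Fintype.mem_piFinset]

lemma latticeSlab_add_ne {n : ℕ} {a b : ℝ} (hb : b ≤ 2 * a) {x y z : ι → ℤ}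
    (hx : x ∈ latticeSlab n a b) (hy : y ∈ latticeSlab n a b) (hz : z ∈ latticeSlab n a b) :
    x + y ≠ z := by
  rintro rfl
  simp only [mem_latticeSlab, Pi.add_apply, Int.cast_add, Finset.sum_add_distrib] at hx hy hz
  linarith [hx.2.1, hy.2.1, hz.2.2]

lemma volume_biUnion_unitCube_le_card (S : Finset (ι → ℤ)) :
    volume (⋃ v ∈ S, Set.Icc (fun i => (v i : ℝ) - 1) fun i => (v i : ℝ)) ≤ S.card := by
  calc volume (⋃ v ∈ S, Set.Icc (fun i => (v i : ℝ) - 1) fun i => (v i : ℝ))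
      ≤ ∑ v ∈ S, volume (Set.Icc (fun i => (v i : ℝ) - 1) fun i => (v i : ℝ)) :=
        measure_biUnion_finset_le S _
    _ = S.card := by simp [Real.volume_Icc_pi]

lemma boxSlab_subset_biUnion_unitCube {n : ℕ} (hn : 1 ≤ n) (a b : ℝ) :
    (boxSlab n a (b - Fintype.card ι) : Set (ι → ℝ)) ⊆
      ⋃ v ∈ latticeSlab n a b, Set.Icc (fun i => (v i : ℝ) - 1) fun i => (v i : ℝ) := by
  rintro w ⟨hbox, ha, hb⟩
  set v : ι → ℤ := fun i => max ⌈w i⌉ 1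
  have hle : ∀ i, w i ≤ v i := fun i =>
    (Int.le_ceil _).trans (by exact_mod_cast le_max_left _ _)
  have hge : ∀ i, (v i : ℝ) ≤ w i + 1 := fun i => by
    simp only [v, Int.cast_max, Int.cast_one, max_le_iff]
    exact ⟨(Int.ceil_lt_add_one _).le, by linarith [(hbox i).1]⟩
  have hv : v ∈ latticeSlab n a b := by
    refine mem_latticeSlab.2 ⟨fun i => ⟨le_max_right _ _, max_le ?_ (by exact_mod_cast hn)⟩, ?_, ?_⟩
    · exact Int.ceil_le.2 (by exact_mod_cast (hbox i).2)
    · exact ha.trans (Finset.sum_le_sum fun i _ => hle i)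
    · calc ∑ i, (v i : ℝ) ≤ ∑ i, (w i + 1) := Finset.sum_le_sum fun i _ => hge i
        _ = ∑ i, w i + Fintype.card ι := by simp [Finset.sum_add_distrib]
        _ < b := by linarith
  exact Set.mem_biUnion hv ⟨fun i => by linarith [hge i], hle⟩

end Lattice

lemma volume_boxSlab_le_card_latticeSlab (m : ℕ) {n : ℕ} (hn : 1 ≤ n) (a b : ℝ) :
    volume (boxSlab n a b : Set (Fin (m + 1) → ℝ)) ≤
      (latticeSlab n a b : Finset (Fin (m + 1) → ℤ)).card + ENNReal.ofReal ((m + 1) * n ^ m) := by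
  have hcover := boxSlab_subset_biUnion_unitCube (ι := Fin (m + 1)) hn a b
  rw [Fintype.card_fin, Nat.cast_succ] at hcover
  calc volume (boxSlab n a b : Set (Fin (m + 1) → ℝ))
      ≤ volume (boxSlab n a (b - (m + 1)) : Set (Fin (m + 1) → ℝ)) +
          volume (boxSlab n (b - (m + 1)) b : Set (Fin (m + 1) → ℝ)) :=
        (measure_mono (boxSlab_subset_union _ _ _ _)).trans (measure_union_le _ _)
    _ ≤ (latticeSlab n a b).card + ENNReal.ofReal (b - (b - (m + 1))) * ENNReal.ofReal n ^ m := by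
        gcongr
        · exact (measure_mono hcover).trans (volume_biUnion_unitCube_le_card _)
        · exact volume_boxSlab_le m n _ _
    _ = (latticeSlab n a b).card + ENNReal.ofReal ((m + 1) * n ^ m) := by
        rw [show b - (b - (m + 1)) = (m + 1 : ℝ) by ring, ← ENNReal.ofReal_pow (Nat.cast_nonneg n),
          ← ENNReal.ofReal_mul (by positivity)]

lemma volume_boxSlab_mul_pow_le_card (m : ℕ) {n : ℕ} (hn : 1 ≤ n) (a b : ℝ) :
    (volume (boxSlab 1 a b : Set (Fin (m + 1) → ℝ))).toReal * n ^ (m + 1) ≤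
      (latticeSlab n (n * a) (n * b) : Finset (Fin (m + 1) → ℤ)).card + (m + 1) * n ^ m := by
  have hn0 : (0 : ℝ) < n := by exact_mod_cast hn
  have h := volume_boxSlab_le_card_latticeSlab m hn (n * a) (n * b)
  have hscale := volume_boxSlab_mul (ι := Fin (m + 1)) hn0 1 a b
  rw [mul_one] at hscale
  rw [hscale, Fintype.card_fin] at h
  have h' := ENNReal.toReal_mono (by simp) h
  rwa [ENNReal.toReal_mul, ENNReal.toReal_ofReal (by positivity),
    ENNReal.toReal_add (ENNReal.natCast_ne_top _) ENNReal.ofReal_ne_top,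
    ENNReal.toReal_natCast, ENNReal.toReal_ofReal (by positivity), mul_comm] at h'

/-- For every `d ≥ 1`, the largest sum-free subset of `{1,…,n}^d` has size at least
`c*_d n^d - O(n^{d-1})`, where `c*_d` is the maximal volume of a slab
`{v ∈ [0,1]^d : u ≤ 𝟙ᵀv < 2u}` over `u ∈ [0,d]`. -/
theorem stmt4 (d : ℕ) (hd : 1 ≤ d) :
    ∃ C : ℝ, ∀ n : ℕ, 1 ≤ n →
      ∃ S : Finset (Fin d → ℤ),
        (∀ v ∈ S, ∀ i, 1 ≤ v i ∧ v i ≤ (n : ℤ)) ∧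
        (∀ x ∈ S, ∀ y ∈ S, ∀ z ∈ S, x + y ≠ z) ∧
        (sSup ((fun u : ℝ =>
            (volume {v : Fin d → ℝ | (∀ i, v i ∈ Set.Icc (0 : ℝ) 1) ∧
              u ≤ ∑ i, v i ∧ ∑ i, v i < 2 * u}).toReal) '' Set.Icc (0 : ℝ) d))
          * (n : ℝ) ^ d - C * (n : ℝ) ^ (d - 1) ≤ (S.card : ℝ) := by
  obtain ⟨m, rfl⟩ : ∃ m, d = m + 1 := ⟨d - 1, by omega⟩
  set F : ℝ → ℝ := fun u => (volume (boxSlab 1 u (2 * u) : Set (Fin (m + 1) → ℝ))).toReal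
  refine ⟨m + 2, fun n hn => ?_⟩
  have hn0 : (0 : ℝ) < n := by exact_mod_cast hn
  obtain ⟨_, ⟨u, -, rfl⟩, hu⟩ := exists_lt_of_lt_csSup
    ((Set.nonempty_Icc.2 (Nat.cast_nonneg (m + 1) : (0 : ℝ) ≤ (m + 1 : ℕ))).image F)
    (sub_lt_self _ (inv_pos.2 hn0))
  refine ⟨latticeSlab n (n * u) (n * (2 * u)), fun v hv => (mem_latticeSlab.1 hv).1,
    fun x hx y hy z hz => latticeSlab_add_ne (by linarith) hx hy hz, ?_⟩
  have hcount : F u * n ^ (m + 1) ≤ _ := volume_boxSlab_mul_pow_le_card m hn u (2 * u)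
  change sSup (F '' _) * _ - _ * _ ^ (m + 1 - 1) ≤ _
  rw [Nat.add_sub_cancel]
  calc sSup (F '' Set.Icc 0 ↑(m + 1)) * n ^ (m + 1) - (m + 2) * n ^ m
      ≤ (F u + (n : ℝ)⁻¹) * n ^ (m + 1) - (m + 2) * n ^ m := by gcongr; linarith
    _ = F u * n ^ (m + 1) - (m + 1) * n ^ m := by field_simp; ring
    _ ≤ _ := by linarith
end

section
/- Let X₁, ..., X_{2k} be i.i.d. uniform on [0,1] and let f_t^{k,2k} be the conditional density of X₁ + ... + X_k given X₁ + ... + X_{2k} = t. Then f_t^{k,2k} is unimodal with mode t/2: it is nondecreasing on [max(0, t−k), t/2] and nonincreasing on [t/2, min(t, k)]. -/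
/-!
Write `f = irwinHall k`. Up to the normalising constant, the conditional density is
`x ↦ f x * f (t - x)`, which is symmetric about `t / 2`. If `f` is log-concave, then for `x ≤ y`
with `x + y ≤ t` the four points `x ≤ y, t - y ≤ t - x` have equal outer and inner sums, so
`f x * f (t - x) ≤ f y * f (t - y)`: the product increases up to `t / 2` and decreases after it.

Log-concavity of `f` (in a multiplicative form that tolerates zeros) is proved by induction on
`k`: the tent `irwinHall 2` is concave on its support `[0, 2]`, and `irwinHall (k + 1)` is the
average of `irwinHall k` over a unit window, which preserves log-concavity by a symmetrisation
argument on `[0, 1] × [p, 1 + p]`.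
-/

/-- The Irwin–Hall density: the probability density function of the sum of `k`
independent `Uniform([0,1])` random variables. -/
noncomputable def irwinHall (k : ℕ) (x : ℝ) : ℝ :=
  (∑ j ∈ Finset.range (k + 1),
      (-1 : ℝ) ^ j * (k.choose j : ℝ) * max (x - j) 0 ^ (k - 1)) /
    (Nat.factorial (k - 1))

/-- `f_t^{k,2k}`: the conditional density of `X₁ + ⋯ + X_k` given
`X₁ + ⋯ + X_{2k} = t`, for i.i.d. uniform `X_i` on `[0,1]`. -/
noncomputable def condDensity (k : ℕ) (t x : ℝ) : ℝ :=
  irwinHall k x * irwinHall k (t - x) / ∫ s : ℝ, irwinHall k s * irwinHall k (t - s)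

open MeasureTheory Set

/-- For nonnegative `f` this is log-concavity, with zeros allowed: `f (x + p) / f x` is antitone
in `x`. -/
def LogConcave (f : ℝ → ℝ) : Prop :=
  ∀ ⦃x y p : ℝ⦄, x ≤ y → 0 ≤ p → f x * f (y + p) ≤ f (x + p) * f y

theorem logConcave_of_concaveOn {f : ℝ → ℝ} {s : Set ℝ} (hf : ConcaveOn ℝ s f)
    (hf₀ : ∀ x, 0 ≤ f x) (hfs : ∀ x ∉ s, f x = 0) : LogConcave f := by
  intro x y p hxy hp
  set u := f x
  set v := f (y + p)
  have hRHS : 0 ≤ f (x + p) * f y := mul_nonneg (hf₀ _) (hf₀ _)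
  by_cases huv : u = 0 ∨ v = 0
  · rcases huv with h | h <;> simp [h, hRHS]
  obtain ⟨hu, hv⟩ := not_or.1 huv
  have hx : x ∈ s := by_contra fun h => hu (hfs x h)
  have hyp : y + p ∈ s := by_contra fun h => hv (hfs _ h)
  rcases (show x ≤ y + p by linarith).eq_or_lt with hL | hL
  · obtain rfl : p = 0 := by linarith
    obtain rfl : y = x := by linarith
    simp [u, v]
  set L := y + p - x
  have hL : 0 < L := by linarith
  set l := p / L
  have hl₀ : 0 ≤ l := div_nonneg hp hL.le
  have hl₁ : 0 ≤ 1 - l := sub_nonneg.2 ((div_le_one hL).2 (by linarith))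
  have hxp : (1 - l) • x + l • (y + p) = x + p := by
    simp only [smul_eq_mul, l]; field_simp; ring
  have hy : l • x + (1 - l) • (y + p) = y := by
    simp only [smul_eq_mul, l]; field_simp; ring
  have h₁ := hf.2 hx hyp hl₁ hl₀ (by ring)
  have h₂ := hf.2 hx hyp hl₀ hl₁ (by ring)
  rw [hxp] at h₁
  rw [hy] at h₂
  simp only [smul_eq_mul] at h₁ h₂
  have h₀ : 0 ≤ l * u + (1 - l) * v := by
    have := hf₀ x; have := hf₀ (y + p); positivity
  calc u * v ≤ u * v + l * (1 - l) * (u - v) ^ 2 := le_add_of_nonneg_right (by positivity)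
    _ = ((1 - l) * u + l * v) * (l * u + (1 - l) * v) := by ring
    _ ≤ f (x + p) * f y := mul_le_mul h₁ h₂ h₀ (hf₀ _)

theorem LogConcave.mul_comp_sub_le {f : ℝ → ℝ} (hf : LogConcave f) {t x y : ℝ} (hxy : x ≤ y)
    (hyt : x + y ≤ t) : f x * f (t - x) ≤ f y * f (t - y) := by
  simpa using hf (x := x) (y := t - y) (p := y - x) (by linarith) (by linarith)

theorem LogConcave.monotoneOn_mul_comp_sub {f : ℝ → ℝ} (hf : LogConcave f) (t : ℝ) :
    MonotoneOn (fun x => f x * f (t - x)) (Iic (t / 2)) := fun x _ y hy hxy =>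
  hf.mul_comp_sub_le hxy (by linarith [mem_Iic.1 hy])

theorem LogConcave.antitoneOn_mul_comp_sub {f : ℝ → ℝ} (hf : LogConcave f) (t : ℝ) :
    AntitoneOn (fun x => f x * f (t - x)) (Ici (t / 2)) := fun x hx y _ hxy => by
  simpa [mul_comm] using hf.mul_comp_sub_le (t := t) (sub_le_sub_left hxy t)
    (by linarith [mem_Ici.1 hx])

-- The kernel integrates over `μ ⊗ μ` to twice the difference of the two sides.
theorem integral_mul_integral_le_of_kernel_nonneg {α : Type*} [MeasurableSpace α] {μ : Measure α}
    [SFinite μ] {A B g h : α → ℝ} (hAg : Integrable (fun z => A z * g z) μ)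
    (hAh : Integrable (fun z => A z * h z) μ) (hBg : Integrable (fun z => B z * g z) μ)
    (hBh : Integrable (fun z => B z * h z) μ)
    (hK : ∀ z w, 0 ≤ (A z * B w - B z * A w) * (g z * h w - g w * h z)) :
    (∫ z, B z * g z ∂μ) * (∫ z, A z * h z ∂μ) ≤ (∫ z, A z * g z ∂μ) * ∫ z, B z * h z ∂μ := by
  have hexpand : ∀ q : α × α, (A q.1 * B q.2 - B q.1 * A q.2) * (g q.1 * h q.2 - g q.2 * h q.1) =
      A q.1 * g q.1 * (B q.2 * h q.2) - A q.1 * h q.1 * (B q.2 * g q.2)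
        - B q.1 * g q.1 * (A q.2 * h q.2) + B q.1 * h q.1 * (A q.2 * g q.2) := fun q => by ring
  have hnonneg : 0 ≤ ∫ q : α × α, (A q.1 * B q.2 - B q.1 * A q.2) * (g q.1 * h q.2 - g q.2 * h q.1)
      ∂μ.prod μ := integral_nonneg fun q => hK q.1 q.2
  simp only [hexpand] at hnonneg
  rw [integral_add ?_ (hBh.mul_prod hAg), integral_sub ?_ (hBg.mul_prod hAh),
    integral_sub (hAg.mul_prod hBh) (hAh.mul_prod hBg)] at hnonneg
  simp only [integral_prod_mul (fun z => A z * _) (fun z => B z * _),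
    integral_prod_mul (fun z => B z * _) (fun z => A z * _)] at hnonneg
  · linarith
  · exact (hAg.mul_prod hBh).sub (hAh.mul_prod hBg)
  · exact ((hAg.mul_prod hBh).sub (hAh.mul_prod hBg)).sub (hBg.mul_prod hAh)

theorem intervalIntegral_eq_integral_indicator_one_mul {a b : ℝ} (hab : a ≤ b) (φ : ℝ → ℝ) :
    ∫ u in a..b, φ u = ∫ z, (Ioc a b).indicator 1 z * φ z := by
  simp_rw [← Set.indicator_mul_left, Pi.one_apply, one_mul]
  rw [integral_indicator measurableSet_Ioc, intervalIntegral.integral_of_le hab]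

theorem LogConcave.intervalIntegral_comp_sub {f : ℝ → ℝ} (hf : LogConcave f)
    (hfc : Continuous f) : LogConcave fun x => ∫ u in (0 : ℝ)..1, f (x - u) := by
  intro x y p hxy hp
  have hshift : ∀ a, ∫ u in (0 : ℝ)..1, f (a - u) = ∫ z in p..1 + p, f (a + p - z) :=
    fun a => by simp
  have hint : ∀ a b c : ℝ, Integrable fun z => (Ioc a b).indicator 1 z * f (c - z) := by
    intro a b c
    have hφ : Continuous fun z => f (c - z) := hfc.comp (continuous_const.sub continuous_id)
    refine ((integrable_indicator_iff (measurableSet_Ioc (a := a) (b := b))).2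
      hφ.integrableOn_Ioc).congr (ae_of_all _ fun z => ?_)
    by_cases hz : z ∈ Ioc a b <;> simp [hz]
  simp only [hshift x, hshift y, intervalIntegral_eq_integral_indicator_one_mul zero_le_one,
    intervalIntegral_eq_integral_indicator_one_mul (show p ≤ 1 + p by linarith)]
  refine integral_mul_integral_le_of_kernel_nonneg (hint _ _ _) (hint _ _ _) (hint _ _ _)
    (hint _ _ _) fun z w => ?_
  set A := (Ioc (0 : ℝ) 1).indicator (1 : ℝ → ℝ)
  set B := (Ioc p (1 + p)).indicator (1 : ℝ → ℝ)
  -- `Ioc 0 1` lies to the left of `Ioc p (1 + p)`.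
  have hAB : ∀ z w, z ≤ w → 0 ≤ A z * B w - B z * A w := by
    intro z w hzw
    by_cases hzw' : z ∈ Ioc p (1 + p) ∧ w ∈ Ioc (0 : ℝ) 1
    · obtain ⟨hzB, hwA⟩ := hzw'
      have hzA : z ∈ Ioc (0 : ℝ) 1 := ⟨by linarith [hzB.1], by linarith [hwA.2]⟩
      have hwB : w ∈ Ioc p (1 + p) := ⟨by linarith [hzB.1], by linarith [hwA.2]⟩
      simp [A, B, hzA, hwB, hzB, hwA]
    · have hBA : B z * A w = 0 := by
        rcases not_and_or.1 hzw' with h | h <;> simp [A, B, h]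
      rw [hBA, sub_zero]
      exact mul_nonneg (indicator_nonneg (fun _ _ => zero_le_one) _)
        (indicator_nonneg (fun _ _ => zero_le_one) _)
  have hgh : ∀ z w, z ≤ w →
      0 ≤ f (x + p - z) * f (y + p - w) - f (x + p - w) * f (y + p - z) := by
    intro z w hzw
    have := hf (x := x + p - w) (y := y + p - w) (p := w - z) (by linarith) (by linarith)
    simp only [sub_add_sub_cancel] at this
    linarith
  rcases le_total z w with hzw | hwz
  · exact mul_nonneg (hAB z w hzw) (hgh z w hzw)
  · calc 0 ≤ (A w * B z - B w * A z) *
            (f (x + p - w) * f (y + p - z) - f (x + p - z) * f (y + p - w)) :=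
          mul_nonneg (hAB w z hwz) (hgh w z hwz)
      _ = _ := by ring

theorem Finset.sum_range_succ_neg_one_pow_mul_choose_mul {R : Type*} [CommRing R] (n : ℕ)
    (M : ℕ → R) :
    ∑ j ∈ range (n + 2), (-1 : R) ^ j * ((n + 1).choose j : R) * M j =
      ∑ j ∈ range (n + 1), (-1 : R) ^ j * (n.choose j : R) * (M j - M (j + 1)) := by
  calc _ = ∑ j ∈ range (n + 2), ((n + 1).choose j : R) * ((-1) ^ j * M j) :=
        sum_congr rfl fun _ _ => by ring
    _ = _ := by
      rw [Finset.sum_choose_succ_mul (fun j _ => (-1 : R) ^ j * M j), ← sum_add_distrib]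
      exact sum_congr rfl fun _ _ => by ring

theorem hasDerivAt_max_zero_pow (m : ℕ) (y : ℝ) :
    HasDerivAt (fun v : ℝ => max v 0 ^ (m + 2)) ((m + 2) * max y 0 ^ (m + 1)) y := by
  have hne : ∀ y ≠ 0,
      HasDerivAt (fun v : ℝ => max v 0 ^ (m + 2)) ((m + 2) * max y 0 ^ (m + 1)) y := by
    intro y hy
    rcases hy.lt_or_gt with hy | hy
    · have hloc : (fun v : ℝ => max v 0 ^ (m + 2)) =ᶠ[nhds y] fun _ => 0 := by
        filter_upwards [Iio_mem_nhds hy] with v hv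
        simp [max_eq_right (mem_Iio.1 hv).le]
      simpa [max_eq_right hy.le] using (hasDerivAt_const y (0 : ℝ)).congr_of_eventuallyEq hloc
    · have hloc : (fun v : ℝ => max v 0 ^ (m + 2)) =ᶠ[nhds y] fun v => v ^ (m + 2) := by
        filter_upwards [Ioi_mem_nhds hy] with v hv
        rw [max_eq_left (mem_Ioi.1 hv).le]
      simpa [max_eq_left hy.le] using (hasDerivAt_pow (m + 2) y).congr_of_eventuallyEq hloc
  rcases eq_or_ne y 0 with rfl | hy
  · exact hasDerivAt_of_hasDerivAt_of_ne hne (by fun_prop) (by fun_prop)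
  · exact hne y hy

theorem integral_max_sub_zero_pow (m : ℕ) (y : ℝ) :
    ∫ u in (0 : ℝ)..1, max (y - u) 0 ^ (m + 1) =
      (max y 0 ^ (m + 2) - max (y - 1) 0 ^ (m + 2)) / (m + 2) := by
  rw [intervalIntegral.integral_comp_sub_left (fun v => max v 0 ^ (m + 1)), sub_zero,
    intervalIntegral.integral_eq_sub_of_hasDerivAt
      (f := fun v => max v 0 ^ (m + 2) / (m + 2))
      (fun v _ => ((hasDerivAt_max_zero_pow m v).div_const ((m : ℝ) + 2)).congr_deriv
        (by field_simp))
      ((by fun_prop : Continuous fun v : ℝ => max v 0 ^ (m + 1)).intervalIntegrable _ _)]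
  ring

theorem continuous_irwinHall (n : ℕ) : Continuous (irwinHall n) := by
  unfold irwinHall
  fun_prop

theorem irwinHall_succ {n : ℕ} (hn : 2 ≤ n) (x : ℝ) :
    irwinHall (n + 1) x = ∫ u in (0 : ℝ)..1, irwinHall n (x - u) := by
  obtain ⟨m, rfl⟩ := Nat.exists_eq_add_of_le' hn
  have hpiece : ∀ j : ℕ, ∫ u in (0 : ℝ)..1, max (x - u - j) 0 ^ (m + 1) =
      (max (x - j) 0 ^ (m + 2) - max (x - (j + 1 : ℕ)) 0 ^ (m + 2)) / (m + 2) := by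
    intro j
    simp_rw [sub_right_comm x _ (j : ℝ), integral_max_sub_zero_pow]
    push_cast
    ring_nf
  have hfact : ((m + 2).factorial : ℝ) = (m + 2) * (m + 1).factorial := by
    push_cast [Nat.factorial_succ]
    ring
  simp only [irwinHall, show m + 2 - 1 = m + 1 from rfl, show m + 2 + 1 - 1 = m + 2 from rfl]
  rw [intervalIntegral.integral_div, intervalIntegral.integral_finsetSum fun j _ =>
    (by fun_prop : Continuous _).intervalIntegrable _ _]
  simp only [intervalIntegral.integral_const_mul, hpiece]
  rw [Finset.sum_range_succ_neg_one_pow_mul_choose_mul, hfact, Finset.sum_div, Finset.sum_div]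
  refine Finset.sum_congr rfl fun j _ => ?_
  field_simp

theorem irwinHall_zero (x : ℝ) : irwinHall 0 x = 1 := by
  simp [irwinHall]

-- The closed formula is degenerate for one summand (`max (x - j) 0 ^ 0 = 1`): `irwinHall 1` is not
-- the uniform density.
theorem irwinHall_one (x : ℝ) : irwinHall 1 x = 0 := by
  simp [irwinHall, Finset.sum_range_succ]

theorem irwinHall_two (x : ℝ) : irwinHall 2 x = max 0 (min x (2 - x)) := by
  simp only [irwinHall, Finset.sum_range_succ]
  norm_num
  rcases le_total x 0 with h0 | h0 <;> rcases le_total x 1 with h1 | h1 <;>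
    rcases le_total x 2 with h2 | h2 <;>
    simp only [max_def, min_def] <;> split_ifs <;> linarith

theorem logConcave_irwinHall_two : LogConcave (irwinHall 2) := by
  have hconc : ConcaveOn ℝ (Icc 0 2) (irwinHall 2) := by
    refine ((concaveOn_id (convex_Icc 0 2)).inf
      ((concaveOn_const 2 (convex_Icc 0 2)).sub (convexOn_id (convex_Icc 0 2)))).congr
      fun x hx => ?_
    simp [irwinHall_two, hx.1, hx.2]
  refine logConcave_of_concaveOn hconc (fun x => by simp [irwinHall_two]) fun x hx => ?_
  rw [irwinHall_two, max_eq_left]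
  rcases not_and_or.1 hx with h | h
  · exact (min_le_left _ _).trans (not_le.1 h).le
  · exact (min_le_right _ _).trans (by linarith [not_le.1 h])

theorem irwinHall_nonneg (n : ℕ) (x : ℝ) : 0 ≤ irwinHall n x := by
  match n with
  | 0 => simp [irwinHall_zero]
  | 1 => simp [irwinHall_one]
  | n + 2 =>
    induction n generalizing x with
    | zero => simp [irwinHall_two]
    | succ n ih =>
      rw [irwinHall_succ (by omega)]
      exact intervalIntegral.integral_nonneg zero_le_one fun u _ => ih _

theorem logConcave_irwinHall (n : ℕ) : LogConcave (irwinHall n) := by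
  match n with
  | 0 => intro x y p _ _; simp [irwinHall_zero]
  | 1 => intro x y p _ _; simp [irwinHall_one]
  | n + 2 =>
    induction n with
    | zero => exact logConcave_irwinHall_two
    | succ n ih =>
      simp only [funext (irwinHall_succ (n := n + 2) (by omega))]
      exact ih.intervalIntegral_comp_sub (continuous_irwinHall _)

theorem stmt6_general (k : ℕ) (t : ℝ) :
    MonotoneOn (condDensity k t) (Set.Icc (max 0 (t - k)) (t / 2)) ∧
      AntitoneOn (condDensity k t) (Set.Icc (t / 2) (min t k)) := by
  have hZ : 0 ≤ ∫ s, irwinHall k s * irwinHall k (t - s) :=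
    integral_nonneg fun s => mul_nonneg (irwinHall_nonneg k s) (irwinHall_nonneg k _)
  have hf := logConcave_irwinHall k
  exact ⟨fun x hx y hy hxy => div_le_div_of_nonneg_right
      (hf.monotoneOn_mul_comp_sub t (Icc_subset_Iic_self hx) (Icc_subset_Iic_self hy) hxy) hZ,
    fun x hx y hy hxy => div_le_div_of_nonneg_right
      (hf.antitoneOn_mul_comp_sub t (Icc_subset_Ici_self hx) (Icc_subset_Ici_self hy) hxy) hZ⟩

/-- `f_t^{k,2k}` is unimodal with mode `t/2`: nondecreasing on `[max(0, t−k), t/2]` and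
nonincreasing on `[t/2, min(t, k)]`. -/
theorem stmt6 (k : ℕ) (hk : 1 ≤ k) (t : ℝ) (ht : t ∈ Set.Ioo (0 : ℝ) (2 * k)) :
    MonotoneOn (condDensity k t) (Set.Icc (max 0 (t - k)) (t / 2)) ∧
      AntitoneOn (condDensity k t) (Set.Icc (t / 2) (min t k)) :=
  stmt6_general k t
end

section
/- Let a, b, c ∈ [0, d] and x, y, z ∈ [0,1]^d satisfy a + b = c and x + y = z. Define the simplices Σ(t, v) = conv{(t/d)𝟙, v, σ(v), ..., σ^{d−1}(v)} where σ is the cyclic coordinate shift. Then the uniform distributions (Unif(Σ(a,x)), Unif(Σ(b,y)), Unif(Σ(c,z))) are compatible: there is a coupling (X, Y, Z) with these marginals and X + Y = Z almost surely. -/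
/-!
The simplex `Σ(t, v)` is the image of the corner simplex `conv{0, e₁, …, e_d}` under the affine
map `F_{t,v}` sending `0 ↦ (t/d)𝟙` and `eᵢ ↦ σ^i(v)`. This map depends linearly on `(t, v)`,
so `F_{a,x} + F_{b,y} = F_{c,z}`. An affine map with nonzero determinant pushes a uniform
distribution forward to the uniform distribution on the image, hence for `P` uniform on the
corner simplex, `(F_{a,x} P, F_{b,y} P, F_{c,z} P)` is the required coupling.
-/

open MeasureTheory

/-- A triple of distributions `(μ₁, μ₂, μ₃)` is compatible if there is a coupling
`(X₁, X₂, X₃)` with these marginals such that `X₁ + X₂ = X₃` almost surely. -/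
def Compatible {α : Type*} [MeasurableSpace α] [Add α] (μ₁ μ₂ μ₃ : Measure α) : Prop :=
  ∃ ρ : Measure (α × α × α),
    IsProbabilityMeasure ρ ∧
    ρ.map (fun p => p.1) = μ₁ ∧
    ρ.map (fun p => p.2.1) = μ₂ ∧
    ρ.map (fun p => p.2.2) = μ₃ ∧
    ∀ᵐ p ∂ρ, p.1 + p.2.1 = p.2.2

/-- The cyclic coordinate shift `σ : (v₁,…,v_d) ↦ (v₂,…,v_d,v₁)`. -/
def cyclicShift (d : ℕ) [NeZero d] (v : Fin d → ℝ) : Fin d → ℝ := fun j => v (j + 1)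

/-- The simplex `Σ(t, v) = conv{(t/d)·𝟙, v, σ(v), …, σ^{d−1}(v)}`. -/
noncomputable def simplexSet (d : ℕ) [NeZero d] (t : ℝ) (v : Fin d → ℝ) :
    Set (Fin d → ℝ) :=
  convexHull ℝ (insert (fun _ => t / d) (Set.range fun i : Fin d => (cyclicShift d)^[i] v))

/-- The uniform probability measure on a set of positive finite volume. -/
noncomputable def uniformOnSet (d : ℕ) (s : Set (Fin d → ℝ)) : Measure (Fin d → ℝ) :=
  (volume s)⁻¹ • volume.restrict s

section Compatible

variable {β α : Type*} [MeasurableSpace β] [MeasurableSpace α] [Add α] [MeasurableAdd₂ α]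
  [MeasurableEq α]

theorem compatible_map_add (μ : Measure β) [IsProbabilityMeasure μ] {f g : β → α}
    (hf : Measurable f) (hg : Measurable g) :
    Compatible (μ.map f) (μ.map g) (μ.map (f + g)) := by
  have hfg : Measurable fun p => (f p, g p, f p + g p) := hf.prodMk (hg.prodMk (hf.add hg))
  refine ⟨μ.map fun p => (f p, g p, f p + g p), Measure.isProbabilityMeasure_map hfg.aemeasurable,
    ?_, ?_, ?_, ?_⟩
  · rw [Measure.map_map (by fun_prop) hfg]; rfl
  · rw [Measure.map_map (by fun_prop) hfg]; rfl
  · rw [Measure.map_map (by fun_prop) hfg]; rfl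
  · rw [ae_map_iff hfg.aemeasurable (measurableSet_eq_fun (by fun_prop) (by fun_prop))]
    exact .of_forall fun _ => rfl

end Compatible

section Barycentric

variable {ι E : Type*} [Fintype ι] [AddCommGroup E] [Module ℝ E]

/-- The affine map sending `0` to `v₀` and the basis vector `eᵢ` to `w i`. -/
noncomputable def baryMap (v₀ : E) (w : ι → E) : (ι → ℝ) →ᵃ[ℝ] E :=
  (Fintype.linearCombination ℝ (w - fun _ => v₀)).toAffineMap + AffineMap.const ℝ _ v₀

theorem baryMap_apply (v₀ : E) (w : ι → E) (p : ι → ℝ) :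
    baryMap v₀ w p = ∑ i, p i • (w i - v₀) + v₀ := rfl

theorem baryMap_add (v₀ v₀' : E) (w w' : ι → E) :
    baryMap v₀ w + baryMap v₀' w' = baryMap (v₀ + v₀') (w + w') := by
  ext p
  simp only [AffineMap.coe_add, Pi.add_apply, baryMap_apply, smul_sub, smul_add,
    Finset.sum_sub_distrib, Finset.sum_add_distrib]
  abel

variable [DecidableEq ι]

def cornerSimplex (ι : Type*) [DecidableEq ι] : Set (ι → ℝ) :=
  convexHull ℝ (insert 0 (Set.range fun i => Pi.single i 1))

theorem baryMap_image_cornerSimplex (v₀ : E) (w : ι → E) :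
    baryMap v₀ w '' cornerSimplex ι = convexHull ℝ (insert v₀ (Set.range w)) := by
  rw [cornerSimplex, AffineMap.image_convexHull, Set.image_insert_eq, ← Set.range_comp]
  congr 3
  · simp [baryMap_apply]
  · ext i
    simp [baryMap_apply, Pi.single_apply]

theorem isCompact_cornerSimplex : IsCompact (cornerSimplex ι) :=
  ((Set.finite_range _).insert 0).isCompact_convexHull ℝ

end Barycentric

section Volume

variable {E : Type*} [NormedAddCommGroup E] [NormedSpace ℝ E] [MeasurableSpace E] [BorelSpace E]
  [FiniteDimensional ℝ E] (μ : Measure E) [μ.IsAddHaarMeasure]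

theorem addHaar_image_affineMap (F : E →ᵃ[ℝ] E) (s : Set E) :
    μ (F '' s) = ENNReal.ofReal |LinearMap.det F.linear| * μ s := by
  rw [show ⇑F = (F 0 + ·) ∘ F.linear from
      funext fun p => by simpa [add_comm] using F.map_vadd 0 p, Set.image_comp,
    Set.image_add_left, measure_preimage_add, Measure.addHaar_image_linearMap]

theorem det_linear_ne_zero_and_measure_ne_zero {F : E →ᵃ[ℝ] E} {s : Set E}
    (h : (interior (F '' s)).Nonempty) :
    LinearMap.det F.linear ≠ 0 ∧ μ s ≠ 0 := by
  have := (Measure.measure_pos_of_nonempty_interior μ h).ne'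
  rw [addHaar_image_affineMap, mul_ne_zero_iff, ENNReal.ofReal_ne_zero_iff, abs_pos] at this
  exact this

end Volume

theorem isProbabilityMeasure_uniformOnSet {n : ℕ} {s : Set (Fin n → ℝ)} (h₀ : volume s ≠ 0)
    (htop : volume s ≠ ⊤) : IsProbabilityMeasure (uniformOnSet n s) :=
  ⟨by simp [uniformOnSet, ENNReal.inv_mul_cancel h₀ htop]⟩

theorem map_uniformOnSet_affineMap {n : ℕ} (F : (Fin n → ℝ) →ᵃ[ℝ] (Fin n → ℝ))
    (hF : LinearMap.det F.linear ≠ 0) (s : Set (Fin n → ℝ)) :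
    (uniformOnSet n s).map F = uniformOnSet n (F '' s) := by
  have hFm : Measurable F := F.continuous_of_finiteDimensional.measurable
  have hdet₀ : ENNReal.ofReal |LinearMap.det F.linear| ≠ 0 := by simpa using hF
  ext t ht
  rw [Measure.map_apply hFm ht, uniformOnSet, uniformOnSet, Measure.smul_apply,
    Measure.smul_apply, Measure.restrict_apply (hFm ht), Measure.restrict_apply ht,
    smul_eq_mul, smul_eq_mul, ← Set.image_preimage_inter ..,
    addHaar_image_affineMap, addHaar_image_affineMap,
    ENNReal.mul_inv (.inl hdet₀) (.inl ENNReal.ofReal_ne_top), mul_mul_mul_comm,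
    ENNReal.inv_mul_cancel hdet₀ ENNReal.ofReal_ne_top, one_mul, Set.inter_comm]

theorem compatible_uniformOnSet_image_add {n : ℕ} {F G : (Fin n → ℝ) →ᵃ[ℝ] (Fin n → ℝ)}
    {s : Set (Fin n → ℝ)} (hs : IsCompact s) (hF : (interior (F '' s)).Nonempty)
    (hG : (interior (G '' s)).Nonempty) (hFG : (interior ((F + G) '' s)).Nonempty) :
    Compatible (uniformOnSet n (F '' s)) (uniformOnSet n (G '' s))
      (uniformOnSet n ((F + G) '' s)) := by
  obtain ⟨hdetF, hvol⟩ := det_linear_ne_zero_and_measure_ne_zero volume hF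
  have := isProbabilityMeasure_uniformOnSet hvol hs.measure_lt_top.ne
  rw [← map_uniformOnSet_affineMap F hdetF,
    ← map_uniformOnSet_affineMap G (det_linear_ne_zero_and_measure_ne_zero volume hG).1,
    ← map_uniformOnSet_affineMap (F + G) (det_linear_ne_zero_and_measure_ne_zero volume hFG).1,
    AffineMap.coe_add]
  exact compatible_map_add _ F.continuous_of_finiteDimensional.measurable
    G.continuous_of_finiteDimensional.measurable

theorem cyclicShift_iterate_add (d : ℕ) [NeZero d] (n : ℕ) (x y : Fin d → ℝ) :
    (cyclicShift d)^[n] (x + y) = (cyclicShift d)^[n] x + (cyclicShift d)^[n] y :=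
  iterate_map_add (AddMonoidHom.mk' (cyclicShift d) fun _ _ => rfl) n x y

theorem simplexSet_eq_image_cornerSimplex (d : ℕ) [NeZero d] (t : ℝ) (v : Fin d → ℝ) :
    simplexSet d t v =
      baryMap (fun _ => t / d) (fun i : Fin d => (cyclicShift d)^[i] v) '' cornerSimplex (Fin d) :=
  (baryMap_image_cornerSimplex _ _).symm

theorem stmt14_general (d : ℕ) [NeZero d] (a b c : ℝ)
    (habc : a + b = c)
    (x y z : Fin d → ℝ)
    (hxyz : x + y = z)
    (hax : (interior (simplexSet d a x)).Nonempty)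
    (hby : (interior (simplexSet d b y)).Nonempty)
    (hcz : (interior (simplexSet d c z)).Nonempty) :
    Compatible (uniformOnSet d (simplexSet d a x)) (uniformOnSet d (simplexSet d b y))
      (uniformOnSet d (simplexSet d c z)) := by
  have hsum : baryMap (fun _ => a / d) (fun i : Fin d => (cyclicShift d)^[i] x) +
      baryMap (fun _ => b / d) (fun i : Fin d => (cyclicShift d)^[i] y) =
      baryMap (fun _ => c / d) (fun i : Fin d => (cyclicShift d)^[i] z) := by
    rw [baryMap_add, ← habc, ← hxyz]
    congr 1
    · ext; simp [add_div]
    · ext i : 1; simp [cyclicShift_iterate_add]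
  simp only [simplexSet_eq_image_cornerSimplex, ← hsum] at hax hby hcz ⊢
  exact compatible_uniformOnSet_image_add isCompact_cornerSimplex hax hby hcz

/-- If `a + b = c` and `x + y = z`, then the uniform distributions on the simplices
`Σ(a,x)`, `Σ(b,y)`, `Σ(c,z)` are compatible. -/
theorem stmt14 (d : ℕ) [NeZero d] (a b c : ℝ)
    (ha : a ∈ Set.Icc (0 : ℝ) d) (hb : b ∈ Set.Icc (0 : ℝ) d) (hc : c ∈ Set.Icc (0 : ℝ) d)
    (habc : a + b = c)
    (x y z : Fin d → ℝ)
    (hx : ∀ i, x i ∈ Set.Icc (0 : ℝ) 1) (hy : ∀ i, y i ∈ Set.Icc (0 : ℝ) 1)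
    (hz : ∀ i, z i ∈ Set.Icc (0 : ℝ) 1)
    (hxyz : x + y = z)
    (hax : (interior (simplexSet d a x)).Nonempty)
    (hby : (interior (simplexSet d b y)).Nonempty)
    (hcz : (interior (simplexSet d c z)).Nonempty) :
    Compatible (uniformOnSet d (simplexSet d a x)) (uniformOnSet d (simplexSet d b y))
      (uniformOnSet d (simplexSet d c z)) :=
  stmt14_general d a b c habc x y z hxyz hax hby hcz
end

section
/- Let S ⊆ {1,...,n}² be sum-free and suppose S contains a point v = (v₁, v₂) with v₁ + v₂ ≥ 17n/10. Then |S| ≤ (3/5)n² + O(n). -/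
/-!
Let `w = (a, b) ∈ S` maximize the product `xy` over `S`, and put `P = ab`. Inside the box
`[0, a] × [0, b]` the involution `p ↦ w - p` pairs points, and sum-freeness allows at most one
point of each pair in `S`, so `S` has at most `(a + 1)(b + 1) / 2` points there. Every point of `S`
outside the box has `x > a` or `y > b`, and lies under the hyperbola `xy = P`; column by column
this gives at most `P (log n - log a) + P (log n - log b)` further points. With `u = P / n²` the
total is `n² (u / 2 - u log u) + O(n)`, and the point `v` forces `u ≥ 7/10`, where
`u / 2 - u log u ≤ 3/5`.
-/

open Finset Real

def SumFree {G : Type*} [Add G] (S : Finset G) : Prop :=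
  ∀ x ∈ S, ∀ y ∈ S, ∀ z ∈ S, x + y ≠ z

theorem SumFree.two_mul_card_inter_le {G : Type*} [AddCommGroup G] [DecidableEq G]
    {S B : Finset G} (hS : SumFree S) {w : G} (hw : w ∈ S) (hB : ∀ p ∈ B, w - p ∈ B) :
    2 * #(S ∩ B) ≤ #B := by
  set T := S ∩ B
  have hdisj : Disjoint T (T.image (w - ·)) := by
    rw [disjoint_left]
    intro p hp hp'
    obtain ⟨q, hq, rfl⟩ := mem_image.1 hp'
    exact hS q (mem_inter.1 hq).1 (w - q) (mem_inter.1 hp).1 w hw (add_sub_cancel q w)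
  have hsub : T ∪ T.image (w - ·) ⊆ B :=
    union_subset inter_subset_right (image_subset_iff.2 fun p hp => hB p (mem_inter.1 hp).2)
  calc 2 * #T = #(T ∪ T.image (w - ·)) := by
        rw [card_union_of_disjoint hdisj, card_image_of_injective _ sub_right_injective, two_mul]
    _ ≤ #B := card_le_card hsub

theorem card_Icc_zero_fin_two {w : Fin 2 → ℤ} (hw : 0 ≤ w) :
    (#(Icc 0 w) : ℝ) = (w 0 + 1) * (w 1 + 1) := by
  have hcast (k : ℤ) (hk : 0 ≤ k) : ((k + 1 - 0).toNat : ℝ) = k + 1 := by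
    rw [sub_zero]; exact_mod_cast Int.toNat_of_nonneg (by omega)
  rw [Pi.card_Icc, Fin.prod_univ_two, Int.card_Icc, Int.card_Icc, Nat.cast_mul, Pi.zero_apply,
    Pi.zero_apply, hcast _ (hw 0), hcast _ (hw 1)]

theorem funext_fin_two_of_ne {α : Type*} {i j : Fin 2} (hij : i ≠ j) {p q : Fin 2 → α}
    (hi : p i = q i) (hj : p j = q j) : p = q := by
  funext k
  obtain rfl | rfl : k = i ∨ k = j := by omega
  exacts [hi, hj]

theorem card_filter_apply_eq_mul_le {T : Finset (Fin 2 → ℤ)} {i j : Fin 2} (hij : i ≠ j)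
    {P x : ℤ} (hP : 0 ≤ P) (hx : 0 < x) (hpos : ∀ p ∈ T, 1 ≤ p j)
    (hprod : ∀ p ∈ T, p i * p j ≤ P) : (#{p ∈ T | p i = x} : ℤ) * x ≤ P := by
  have hcard : #{p ∈ T | p i = x} ≤ #(Icc 1 (P / x)) := by
    refine card_le_card_of_injOn (· j) (fun p hp => ?_) fun p hp q hq hpq => ?_
    · rw [coe_filter] at hp
      rw [coe_Icc, Set.mem_Icc, Int.le_ediv_iff_mul_le hx, ← hp.2, mul_comm]
      exact ⟨hpos p hp.1, hprod p hp.1⟩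
    · rw [coe_filter] at hp hq
      exact funext_fin_two_of_ne hij (hp.2.trans hq.2.symm) hpq
  rw [Int.card_Icc, add_sub_cancel_right] at hcard
  calc (#{p ∈ T | p i = x} : ℤ) * x ≤ P / x * x := by
        gcongr
        rw [← Int.toNat_of_nonneg (Int.ediv_nonneg hP hx.le)]
        exact_mod_cast hcard
    _ ≤ P := Int.ediv_mul_le P hx.ne'

theorem sum_Ioc_inv_le_log_sub_log {a : ℤ} (ha : 0 < a) {n : ℤ} (han : a ≤ n) :
    ∑ x ∈ Ioc a n, (x : ℝ)⁻¹ ≤ log n - log a := by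
  induction n, han using Int.leInduction with
  | base => simp
  | succ n han ih =>
    have hn : (0 : ℝ) < n := by exact_mod_cast ha.trans_le han
    have hstep : ((n + 1 : ℤ) : ℝ)⁻¹ ≤ log (n + 1 : ℤ) - log n := by
      have := one_sub_inv_le_log_of_pos (show (0 : ℝ) < (n + 1) / n by positivity)
      rw [log_div (by positivity) hn.ne', inv_div, one_sub_div (by positivity)] at this
      push_cast
      simpa using this
    rw [← insert_Ioc_right_eq_Ioc_add_one han, sum_insert (by simp)]
    linarith

theorem card_filter_lt_apply_le {T : Finset (Fin 2 → ℤ)} {i j : Fin 2} (hij : i ≠ j)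
    {P a n : ℤ} (hP : 0 ≤ P) (ha : 0 < a) (han : a ≤ n)
    (hbox : ∀ p ∈ T, ∀ k, 1 ≤ p k ∧ p k ≤ n) (hprod : ∀ p ∈ T, p i * p j ≤ P) :
    (#{p ∈ T | a < p i} : ℝ) ≤ P * (log n - log a) := by
  set T' := {p ∈ T | a < p i}
  have hT' : ∀ p ∈ T', p ∈ T := fun p hp => (mem_filter.1 hp).1
  have hfiber (x : ℤ) (hx : x ∈ Ioc a n) : (#{p ∈ T' | p i = x} : ℝ) ≤ P * (x : ℝ)⁻¹ := by
    have hx0 : 0 < x := ha.trans (mem_Ioc.1 hx).1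
    rw [← div_eq_mul_inv, le_div_iff₀ (by exact_mod_cast hx0)]
    exact_mod_cast card_filter_apply_eq_mul_le hij hP hx0 (fun p hp => (hbox p (hT' p hp) j).1)
      fun p hp => hprod p (hT' p hp)
  have hmaps : ∀ p ∈ T', p i ∈ Ioc a n := fun p hp =>
    mem_Ioc.2 ⟨(mem_filter.1 hp).2, (hbox p (hT' p hp) i).2⟩
  calc (#T' : ℝ) = ∑ x ∈ Ioc a n, (#{p ∈ T' | p i = x} : ℝ) := by
        exact_mod_cast card_eq_sum_card_fiberwise hmaps
    _ ≤ ∑ x ∈ Ioc a n, P * (x : ℝ)⁻¹ := sum_le_sum hfiber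
    _ ≤ P * (log n - log a) := by
        rw [← mul_sum]
        exact mul_le_mul_of_nonneg_left (sum_Ioc_inv_le_log_sub_log ha han) (by exact_mod_cast hP)

theorem log_ten_div_seven_le : log (10 / 7) ≤ 5 / 14 := by
  rw [log_le_iff_le_exp (by norm_num)]
  refine le_of_pow_le_pow_left₀ (n := 14) (by norm_num) (exp_pos _).le ?_
  rw [← exp_nat_mul]
  calc (10 / 7 : ℝ) ^ 14 ≤ 2.7182818283 ^ 5 := by norm_num
    _ ≤ exp 1 ^ 5 := by gcongr; exact exp_one_gt_d9.le
    _ = exp (14 * (5 / 14)) := by rw [← exp_nat_mul]; norm_num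

-- `u / 2 - u log u` decreases for `u ≥ e^(-1/2)`; its value at `7/10` is `0.5997…`. The proof
-- uses the tangent-line bound `log u ≥ log (7/10) + 1 - (7/10) / u`.
theorem half_sub_mul_log_le {u : ℝ} (hu : 7 / 10 ≤ u) : u / 2 - u * log u ≤ 3 / 5 := by
  have hu0 : 0 < u := by linarith
  have htangent : 1 - 7 / 10 / u ≤ log (u / (7 / 10)) := by
    simpa using one_sub_inv_le_log_of_pos (show 0 < u / (7 / 10) by positivity)
  have hlog : log (u / (7 / 10)) = log u + log (10 / 7) := by
    rw [log_div hu0.ne' (by norm_num), sub_eq_add_neg, ← log_inv]; norm_num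
  have hcancel : u * (7 / 10 / u) = 7 / 10 := mul_div_cancel₀ _ hu0.ne'
  have := log_ten_div_seven_le
  nlinarith

theorem half_add_mul_log_le {P n : ℝ} (hn : 0 < n) (hP : 7 / 10 * n ^ 2 ≤ P) :
    P / 2 + P * (2 * log n - log P) ≤ 3 / 5 * n ^ 2 := by
  have hn2 : 0 < n ^ 2 := by positivity
  set u := P / n ^ 2
  have hPu : P = n ^ 2 * u := by simp only [u]; field_simp
  have hu : 7 / 10 ≤ u := by rw [le_div_iff₀ hn2]; linarith
  have hlog : log P = 2 * log n + log u := by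
    rw [hPu, log_mul hn2.ne' (by positivity), log_pow]; push_cast; ring
  calc P / 2 + P * (2 * log n - log P) = n ^ 2 * (u / 2 - u * log u) := by rw [hlog, hPu]; ring
    _ ≤ n ^ 2 * (3 / 5) := by gcongr; exact half_sub_mul_log_le hu
    _ = 3 / 5 * n ^ 2 := mul_comm _ _

theorem SumFree.card_le_of_forall_mul_le_mul {S : Finset (Fin 2 → ℤ)} (hS : SumFree S) {n : ℤ}
    (hbox : ∀ p ∈ S, ∀ i, 1 ≤ p i ∧ p i ≤ n) {w : Fin 2 → ℤ} (hw : w ∈ S)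
    (hmax : ∀ p ∈ S, p 0 * p 1 ≤ w 0 * w 1) :
    (#S : ℝ) ≤ (w 0 * w 1 : ℝ) / 2 + (w 0 * w 1 : ℝ) * (2 * log n - log (w 0 * w 1 : ℝ))
      + n + 1 / 2 := by
  have hcover : S ⊆ S ∩ Icc 0 w ∪ {p ∈ S | w 0 < p 0} ∪ {p ∈ S | w 1 < p 1} := by
    intro p hp
    simp only [mem_union, mem_inter, mem_filter, mem_Icc, Pi.le_def, Fin.forall_fin_two,
      Pi.zero_apply, hp, true_and]
    have := hbox p hp
    simp only [Fin.forall_fin_two] at this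
    omega
  have hw0 := hbox w hw 0
  have hw1 := hbox w hw 1
  have hsplit : (#S : ℝ) ≤ #(S ∩ Icc 0 w) + #{p ∈ S | w 0 < p 0} + #{p ∈ S | w 1 < p 1} := by
    have := card_union_le (S ∩ Icc 0 w) {p ∈ S | w 0 < p 0}
    have := card_union_le (S ∩ Icc 0 w ∪ {p ∈ S | w 0 < p 0}) {p ∈ S | w 1 < p 1}
    have := card_le_card hcover
    exact_mod_cast (by omega : #S ≤ _)
  have hlower : (#(S ∩ Icc 0 w) : ℝ) ≤ (w 0 + 1) * (w 1 + 1) / 2 := by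
    have hpairs : 2 * #(S ∩ Icc 0 w) ≤ #(Icc 0 w) :=
      hS.two_mul_card_inter_le hw fun p hp => by simpa [mem_Icc] using (mem_Icc.1 hp).symm
    rw [← card_Icc_zero_fin_two (by simp [Pi.le_def, Fin.forall_fin_two]; omega)]
    rw [le_div_iff₀ two_pos]
    exact_mod_cast (mul_comm _ _).trans_le hpairs
  have hP : (0 : ℤ) ≤ w 0 * w 1 := mul_nonneg (by omega) (by omega)
  have hcol := card_filter_lt_apply_le (i := 0) (j := 1) (by decide) hP (by omega) hw0.2 hbox hmax
  have hrow := card_filter_lt_apply_le (i := 1) (j := 0) (by decide) hP (by omega) hw1.2 hbox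
    fun p hp => (mul_comm _ _).trans_le (hmax p hp)
  have hw0' : (1 : ℝ) ≤ w 0 ∧ (w 0 : ℝ) ≤ n := by exact_mod_cast hw0
  have hw1' : (1 : ℝ) ≤ w 1 ∧ (w 1 : ℝ) ≤ n := by exact_mod_cast hw1
  rw [log_mul (by linarith) (by linarith)]
  push_cast at hcol hrow
  linarith

/-- If a sum-free `S ⊆ {1,…,n}²` contains a point `v` with `v₁ + v₂ ≥ 17n/10`, then
`|S| ≤ (3/5)n² + O(n)`. -/
theorem stmt17 : ∃ C : ℝ, ∀ n : ℕ, ∀ S : Finset (Fin 2 → ℤ),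
    (∀ v ∈ S, ∀ i, 1 ≤ v i ∧ v i ≤ (n : ℤ)) →
    (∀ x ∈ S, ∀ y ∈ S, ∀ z ∈ S, x + y ≠ z) →
    (∃ v ∈ S, (17 : ℝ) * n / 10 ≤ (v 0 : ℝ) + (v 1 : ℝ)) →
    (S.card : ℝ) ≤ 3 / 5 * (n : ℝ) ^ 2 + C * n := by
  refine ⟨2, fun n S hbox hS ⟨v, hv, hvsum⟩ => ?_⟩
  obtain ⟨w, hw, hmax⟩ := S.exists_max_image (fun p => p 0 * p 1) ⟨v, hv⟩
  have hv0 : (1 : ℝ) ≤ v 0 ∧ (v 0 : ℝ) ≤ n := by exact_mod_cast hbox v hv 0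
  have hv1 : (1 : ℝ) ≤ v 1 ∧ (v 1 : ℝ) ≤ n := by exact_mod_cast hbox v hv 1
  have hvw : (v 0 * v 1 : ℝ) ≤ w 0 * w 1 := by exact_mod_cast hmax v hv
  -- `v₀ v₁ ≥ n (v₀ + v₁ - n)` because `(n - v₀)(n - v₁) ≥ 0`
  have hlarge : 7 / 10 * (n : ℝ) ^ 2 ≤ w 0 * w 1 := by
    nlinarith [mul_nonneg (sub_nonneg.2 hv0.2) (sub_nonneg.2 hv1.2)]
  have hcount := SumFree.card_le_of_forall_mul_le_mul hS hbox hw hmax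
  have hanalytic := half_add_mul_log_le (by linarith) hlarge
  push_cast at hcount
  linarith
end
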